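/- Let k be a natural number and let R be an ℕ^k-graded ring, i.e. a ring graded by the additive monoid Fin k → ℕ, with grading 𝒜 : (Fin k → ℕ) → AddSubgroup R. Let A be a right ideal of R whose right annihilator A^r = { t ∈ R | ∀ a ∈ A, a * t = 0 } is non-trivial. Then A^r contains a non-zero homogeneous element: there exist v ∈ Fin k → ℕ and a non-zero h ∈ 𝒜 v such that a * h = 0 for every a ∈ A. -/

import Mathlib

/-!
Order the degrees lexicographically, which makes `ℕ^k` a linearly ordered cancellative monoid.
Among the nonzero elements of the right annihilator (a left ideal, since `A` is a right ideal)
pick `t` with the fewest homogeneous components, and let `t_m` be its top component. If `r t = 0`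
and `r_w` is the top component of `r`, then `r_w t_m` is the top component of `r t`, so it
vanishes; hence `r_w t` is a left multiple of `t` with fewer components, so `r_w t = 0` by
minimality, and induction on `r - r_w` gives `r t_m = 0`. Applied to `r ∈ A`, this puts the
nonzero homogeneous `t_m` in the annihilator.
-/

open DirectSum Finset

section GradedRing

variable {ι R σ : Type*} [DecidableEq ι] [AddMonoid ι] [Ring R] [SetLike σ R]
  [AddSubgroupClass σ R] (𝒜 : ι → σ) [GradedRing 𝒜]

theorem decompose_sub_decompose (r : R) (i : ι) :
    decompose 𝒜 (r - decompose 𝒜 r i) = (decompose 𝒜 r).erase i := by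
  ext u
  rw [decompose_sub, decompose_coe, DFinsupp.erase_apply, DFinsupp.sub_apply]
  split_ifs with h
  · subst h; simp
  · rw [of_eq_of_ne _ _ _ h, sub_zero]

open scoped Classical in
theorem support_decompose_sum_subset {κ : Type*} {s : Finset κ} {f : κ → R} {g : κ → ι}
    (hf : ∀ v ∈ s, f v ∈ 𝒜 (g v)) : (decompose 𝒜 (∑ v ∈ s, f v)).support ⊆ s.image g := by
  intro u hu
  rw [DFinsupp.mem_support_iff, decompose_sum, DFinsupp.finsetSum_apply] at hu
  obtain ⟨v, hv, hne⟩ := exists_ne_zero_of_sum_ne_zero hu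
  rw [decompose_of_mem 𝒜 (hf v hv)] at hne
  refine mem_image.mpr ⟨v, hv, ?_⟩
  by_contra h
  exact hne (of_eq_of_ne _ _ _ (Ne.symm h))

open scoped Classical in
theorem card_support_decompose_mul_lt {x t : R} {i j : ι} (hx : x ∈ 𝒜 i)
    (hj : j ∈ (decompose 𝒜 t).support) (hxt : x * decompose 𝒜 t j = 0) :
    #(decompose 𝒜 (x * t)).support < #(decompose 𝒜 t).support := by
  have hsum : x * t = ∑ v ∈ (decompose 𝒜 t).support.erase j, x * decompose 𝒜 t v := by
    rw [sum_erase _ (f := fun v ↦ x * decompose 𝒜 t v) hxt, ← mul_sum, sum_support_decompose]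
  calc #(decompose 𝒜 (x * t)).support
      ≤ #(((decompose 𝒜 t).support.erase j).image (i + ·)) := by
        rw [hsum]
        exact card_le_card <| support_decompose_sum_subset 𝒜 fun v _ ↦
          SetLike.mul_mem_graded hx (SetLike.coe_mem _)
    _ ≤ #((decompose 𝒜 t).support.erase j) := card_image_le
    _ < #(decompose 𝒜 t).support := card_erase_lt_of_mem hj

end GradedRing

section LinearlyOrderedGrading

variable {ι R σ : Type*} [DecidableEq ι] [AddCommMonoid ι] [LinearOrder ι]
  [IsOrderedCancelAddMonoid ι] [Ring R] [SetLike σ R] [AddSubgroupClass σ R]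
  (𝒜 : ι → σ) [GradedRing 𝒜]

open scoped Classical in
theorem coe_decompose_mul_add_of_forall_le {r t : R} {i j : ι}
    (hr : ∀ i' ∈ (decompose 𝒜 r).support, i' ≤ i) (ht : ∀ j' ∈ (decompose 𝒜 t).support, j' ≤ j) :
    (decompose 𝒜 (r * t) (i + j) : R) = decompose 𝒜 r i * decompose 𝒜 t j := by
  rw [decompose_mul, coe_mul_apply, sum_eq_single (i, j)]
  · rintro ⟨i', j'⟩ hmem hne
    simp only [mem_filter, mem_product] at hmem
    obtain ⟨⟨hi', hj'⟩, hsum⟩ := hmem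
    obtain ⟨rfl, rfl⟩ := (add_eq_add_iff_eq_and_eq (hr i' hi') (ht j' hj')).mp hsum
    exact absurd rfl hne
  · intro hnot
    simp only [mem_filter, mem_product, and_true, not_and_or, DFinsupp.notMem_support_iff] at hnot
    rcases hnot with hi | hj
    · simp [hi]
    · simp [hj]

open scoped Classical in
theorem mul_decompose_eq_zero_of_mul_eq_zero {t : R}
    (hmin : ∀ x : R, x * t ≠ 0 → #(decompose 𝒜 t).support ≤ #(decompose 𝒜 (x * t)).support)
    {j : ι} (hj : j ∈ (decompose 𝒜 t).support) (hjmax : ∀ j' ∈ (decompose 𝒜 t).support, j' ≤ j)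
    {r : R} (hr : r * t = 0) : r * decompose 𝒜 t j = 0 := by
  induction h : (decompose 𝒜 r).support using Finset.induction_on_max generalizing r with
  | empty =>
    rw [DFinsupp.support_eq_empty, ← decompose_zero (ℳ := 𝒜)] at h
    rw [(decompose 𝒜).injective h, zero_mul]
  | insert i s hs ih =>
    have hri : ∀ i' ∈ (decompose 𝒜 r).support, i' ≤ i := by
      rw [h]
      exact (forall_mem_insert _ _ _).mpr ⟨le_rfl, fun i' hi' ↦ (hs i' hi').le⟩
    have htop : (decompose 𝒜 r i : R) * decompose 𝒜 t j = 0 := by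
      rw [← coe_decompose_mul_add_of_forall_le 𝒜 hri hjmax, hr, decompose_zero]
      rfl
    have hrit : (decompose 𝒜 r i : R) * t = 0 := by
      by_contra hne
      exact (card_support_decompose_mul_lt 𝒜 (SetLike.coe_mem _) hj htop).not_ge (hmin _ hne)
    have hrest : (r - decompose 𝒜 r i) * t = 0 := by rw [sub_mul, hr, hrit, sub_zero]
    have hsupp : (decompose 𝒜 (r - decompose 𝒜 r i)).support = s := by
      rw [decompose_sub_decompose, DFinsupp.support_erase, h,
        erase_insert fun his ↦ (hs i his).false]
    calc r * decompose 𝒜 t j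
        = (r - decompose 𝒜 r i) * decompose 𝒜 t j + decompose 𝒜 r i * decompose 𝒜 t j := by
          rw [sub_mul, sub_add_cancel]
      _ = 0 := by rw [ih hrest hsupp, htop, add_zero]

theorem exists_homogeneous_ne_zero_forall_mul_eq_zero (A : Set R)
    (hA : ∀ a ∈ A, ∀ t : R, a * t ∈ A) (hann : ∃ t : R, t ≠ 0 ∧ ∀ a ∈ A, a * t = 0) :
    ∃ (i : ι) (h : R), h ∈ 𝒜 i ∧ h ≠ 0 ∧ ∀ a ∈ A, a * h = 0 := by
  classical
  obtain ⟨t, ⟨ht0, htA⟩, hmin⟩ := (measure fun t ↦ #(decompose 𝒜 t).support).wf.has_min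
    {t | t ≠ 0 ∧ ∀ a ∈ A, a * t = 0} hann
  have hsupp : (decompose 𝒜 t).support.Nonempty := by
    rw [nonempty_iff_ne_empty, Ne, DFinsupp.support_eq_empty, ← decompose_zero (ℳ := 𝒜)]
    exact fun h ↦ ht0 ((decompose 𝒜).injective h)
  set j := (decompose 𝒜 t).support.max' hsupp
  have hj : j ∈ (decompose 𝒜 t).support := max'_mem _ hsupp
  have hmul : ∀ x : R, x * t ≠ 0 → #(decompose 𝒜 t).support ≤ #(decompose 𝒜 (x * t)).support :=
    fun x hxt ↦ not_lt.mp <| hmin (x * t)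
      ⟨hxt, fun a ha ↦ by rw [← mul_assoc]; exact htA _ (hA a ha x)⟩
  refine ⟨j, decompose 𝒜 t j, SetLike.coe_mem _, by simpa using hj, fun a ha ↦ ?_⟩
  exact mul_decompose_eq_zero_of_mul_eq_zero 𝒜 hmul hj (fun j' ↦ le_max' _ j') (htA a ha)

end LinearlyOrderedGrading

theorem exists_homogeneous_annihilator_of_nkGraded
    {k : ℕ} {R : Type*} [Ring R] (𝒜 : (Fin k → ℕ) → AddSubgroup R) [GradedRing 𝒜]
    (A : AddSubgroup R) (hA : ∀ a ∈ A, ∀ t : R, a * t ∈ A)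
    (hann : ∃ t : R, t ≠ 0 ∧ ∀ a ∈ A, a * t = 0) :
    ∃ (v : Fin k → ℕ) (h : R), h ∈ 𝒜 v ∧ h ≠ 0 ∧ ∀ a ∈ A, a * h = 0 := by
  let _ : GradedRing (ι := Lex (Fin k → ℕ)) 𝒜 := ‹GradedRing 𝒜›
  exact exists_homogeneous_ne_zero_forall_mul_eq_zero (ι := Lex (Fin k → ℕ)) 𝒜 A hA hann
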